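/- arXiv:0812.0390 — 5 statements merged into one kernel-verified Lean document; each statement's English description precedes it below -/
import Mathlib

section
/- If in addition ω(s)/s → 0 as s → +∞, then z(t)/|t| → 0 both as t → +∞ and as t → −∞. -/
/-!
Sublinearity of the continuous path `ω` at both ends means `ω = o(id)` along the cocompact filter,
so for every `ε > 0` there is `C` with `|ω u| ≤ ε |u| + C` on all of `ℝ`. Inserted into the
integral, together with `∫_{-∞}^0 e^s ds = 1` and `∫_{-∞}^0 e^s |s| ds < ∞`, this gives
`|z t| ≤ |σ| (2ε |t| + C')`, hence `z = o(|t|)` at infinity.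
-/

open Real Set Filter Topology MeasureTheory Asymptotics

lemma Asymptotics.IsLittleO.exists_norm_le_mul_add {X E F : Type*} [TopologicalSpace X]
    [SeminormedAddCommGroup E] [SeminormedAddCommGroup F] {f : X → E} {g : X → F}
    (h : f =o[cocompact X] g) (hf : Continuous f) {ε : ℝ} (hε : 0 < ε) :
    ∃ C, ∀ x, ‖f x‖ ≤ ε * ‖g x‖ + C := by
  obtain ⟨K, hK, hfK⟩ := mem_cocompact.1 (h.bound hε)
  obtain ⟨C, hC⟩ := hK.exists_bound_of_continuousOn hf.continuousOn
  refine ⟨max C 0, fun x => ?_⟩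
  by_cases hx : x ∈ K
  · have : 0 ≤ ε * ‖g x‖ := by positivity
    linarith [hC x hx, le_max_left C 0]
  · exact (hfK hx).trans (le_add_of_nonneg_right (le_max_right _ _))

lemma Asymptotics.isLittleO_of_forall_norm_le_mul_add {α E F : Type*} [Norm E] [Norm F]
    {l : Filter α} {f : α → E} {g : α → F} (hg : Tendsto (fun x => ‖g x‖) l atTop)
    (h : ∀ ε > 0, ∃ C, ∀ x, ‖f x‖ ≤ ε * ‖g x‖ + C) : f =o[l] g := by
  refine IsLittleO.of_bound fun c hc => ?_
  obtain ⟨C, hC⟩ := h (c / 2) (half_pos hc)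
  filter_upwards [hg.eventually_ge_atTop (2 * C / c)] with x hx
  have : C ≤ c / 2 * ‖g x‖ := by
    rw [div_le_iff₀ hc] at hx
    linarith
  linarith [hC x]

lemma integrableOn_exp_mul_abs_Iic_zero : IntegrableOn (fun s => exp s * |s|) (Iic 0) := by
  refine ((integrableOn_exp_mul_Iic one_half_pos 0).const_mul 2).mono'
    (by fun_prop : Continuous fun s : ℝ => exp s * |s|).aestronglyMeasurable ?_
  filter_upwards [ae_restrict_mem measurableSet_Iic] with s (hs : s ≤ 0)
  have hexp : exp s = exp (1 / 2 * s) * exp (1 / 2 * s) := by rw [← exp_add]; ring_nf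
  have hle : -(1 / 2 * s) * exp (1 / 2 * s) ≤ 1 := by
    calc -(1 / 2 * s) * exp (1 / 2 * s) ≤ exp (-(1 / 2 * s)) * exp (1 / 2 * s) := by
          gcongr; linarith [add_one_le_exp (-(1 / 2 * s))]
      _ = 1 := by rw [← exp_add, neg_add_cancel, exp_zero]
  rw [norm_of_nonneg (by positivity), abs_of_nonpos hs, hexp]
  nlinarith [exp_pos (1 / 2 * s)]

lemma abs_setIntegral_exp_mul_sub_le {ω : ℝ → ℝ} {ε C : ℝ} (hε : 0 ≤ ε)
    (hω : ∀ u, |ω u| ≤ ε * |u| + C) (t : ℝ) :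
    |∫ s in Iic 0, exp s * (ω (s + t) - ω t)| ≤
      2 * ε * |t| + (ε * ∫ s in Iic 0, exp s * |s|) + 2 * C := by
  have h1 := integrableOn_exp_mul_abs_Iic_zero.const_mul ε
  have h2 := (integrableOn_exp_Iic 0).const_mul (2 * ε * |t| + 2 * C)
  calc |∫ s in Iic 0, exp s * (ω (s + t) - ω t)|
      ≤ ∫ s in Iic 0, ε * (exp s * |s|) + (2 * ε * |t| + 2 * C) * exp s := by
        rw [← Real.norm_eq_abs]
        refine norm_integral_le_of_norm_le (h1.add h2) (.of_forall fun s => ?_)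
        have : |ω (s + t) - ω t| ≤ ε * |s| + 2 * ε * |t| + 2 * C := by
          nlinarith [abs_sub (ω (s + t)) (ω t), abs_add_le s t, hω (s + t), hω t]
        rw [norm_mul, norm_of_nonneg (exp_pos s).le, Real.norm_eq_abs]
        nlinarith [exp_pos s]
    _ = _ := by
        rw [integral_add h1 h2, integral_const_mul, integral_const_mul, integral_exp_Iic_zero]
        ring

theorem ou_sublinear_general
    (σ : ℝ) (ω : ℝ → ℝ) (hωcont : Continuous ω)
    (hsub_bot : Filter.Tendsto (fun s => ω s / s) Filter.atBot (nhds 0))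
    (hsub_top : Filter.Tendsto (fun s => ω s / s) Filter.atTop (nhds 0))
    (z : ℝ → ℝ)
    (hz : ∀ t : ℝ, z t = σ * ∫ s in Set.Iic (0:ℝ), Real.exp s * (ω (s + t) - ω t)) :
    Filter.Tendsto (fun t => z t / |t|) Filter.atTop (nhds 0) ∧
    Filter.Tendsto (fun t => z t / |t|) Filter.atBot (nhds 0) := by
  have hω : ω =o[cocompact ℝ] id := by
    rw [cocompact_eq_atBot_atTop]
    refine .sup ((isLittleO_iff_tendsto' ?_).2 hsub_bot) ((isLittleO_iff_tendsto' ?_).2 hsub_top)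
    · exact (eventually_ne_atBot 0).mono fun x hx h => (hx h).elim
    · exact (eventually_ne_atTop 0).mono fun x hx h => (hx h).elim
  have hI : (fun t => ∫ s in Iic 0, exp s * (ω (s + t) - ω t)) =o[cocompact ℝ] id := by
    refine isLittleO_of_forall_norm_le_mul_add tendsto_norm_cocompact_atTop fun ε hε => ?_
    obtain ⟨C, hC⟩ := hω.exists_norm_le_mul_add hωcont (half_pos hε)
    refine ⟨ε / 2 * (∫ s in Iic 0, exp s * |s|) + 2 * C, fun t => ?_⟩
    refine (abs_setIntegral_exp_mul_sub_le (half_pos hε).le hC t).trans_eq ?_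
    simp only [id, Real.norm_eq_abs]
    ring
  have hz' : z =o[cocompact ℝ] (|·|) := by
    rw [funext hz]
    exact isLittleO_abs_right.2 (hI.const_mul_left σ)
  exact ⟨hz'.tendsto_div_nhds_zero.mono_left atTop_le_cocompact,
    hz'.tendsto_div_nhds_zero.mono_left atBot_le_cocompact⟩

/-- For the pathwise stationary Ornstein–Uhlenbeck process
`z t = σ ∫_{−∞}^0 e^s (ω (s+t) − ω t) ds` driven by a continuous path `ω` with `ω 0 = 0`
that is sublinear at both `−∞` and `+∞`, one has `z t / |t| → 0` as `t → ±∞`. -/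
theorem ou_sublinear
    (σ : ℝ) (ω : ℝ → ℝ) (hωcont : Continuous ω) (hω0 : ω 0 = 0)
    (hsub_bot : Filter.Tendsto (fun s => ω s / s) Filter.atBot (nhds 0))
    (hsub_top : Filter.Tendsto (fun s => ω s / s) Filter.atTop (nhds 0))
    (z : ℝ → ℝ)
    (hz : ∀ t : ℝ, z t = σ * ∫ s in Set.Iic (0:ℝ), Real.exp s * (ω (s + t) - ω t)) :
    Filter.Tendsto (fun t => z t / |t|) Filter.atTop (nhds 0) ∧
    Filter.Tendsto (fun t => z t / |t|) Filter.atBot (nhds 0) :=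
  ou_sublinear_general σ ω hωcont hsub_bot hsub_top z hz
end

section
/- If in addition ω(s)/s → 0 as s → +∞, then (1/t) ∫_0^t z(s) ds → 0 both as t → +∞ and as t → −∞. -/
/-!
Let `G t = ∫_{-∞}^0 e^s ω(s+t) ds = e^{-t} ∫_{-∞}^t e^u ω(u) du` (`expAverage` below). Then
`z = σ (G - ω)` and `G' = ω - G`, so `∫_0^t z = -σ (G t - G 0)` and it suffices that
`G t = o(t)` as `t → ±∞`. For continuous `ω`, sublinearity at both ends means
`|ω u| ≤ ε |u| + C_ε` for every `ε > 0`, and this bound passes to `G` up to the extra constant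
`ε ∫_{-∞}^0 e^s |s| ds`.
-/

open MeasureTheory Filter Set Real Asymptotics Topology Bornology

section LinearGrowth

variable {E F : Type*} [NormedAddCommGroup E] [NormedAddCommGroup F] {f : E → F}

theorem Continuous.exists_norm_le_mul_norm_add_of_isLittleO [ProperSpace E]
    (hf : Continuous f) (h : f =o[cobounded E] id) {ε : ℝ} (hε : 0 < ε) :
    ∃ C, ∀ x, ‖f x‖ ≤ ε * ‖x‖ + C := by
  rw [Metric.cobounded_eq_cocompact] at h
  obtain ⟨K, hK, hKf⟩ := mem_cocompact.1 (h.bound hε)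
  obtain ⟨C, hC⟩ := hK.exists_bound_of_continuousOn hf.continuousOn
  refine ⟨max C 0, fun x => ?_⟩
  have := mul_nonneg hε.le (norm_nonneg x)
  by_cases hx : x ∈ K
  · linarith [hC x hx, le_max_left C 0]
  · linarith [show ‖f x‖ ≤ ε * ‖x‖ from hKf hx, le_max_right C 0]

theorem isLittleO_id_cobounded_of_forall_norm_le
    (h : ∀ ε > 0, ∃ C, ∀ x, ‖f x‖ ≤ ε * ‖x‖ + C) : f =o[cobounded E] id := by
  refine IsLittleO.of_bound fun c hc => ?_
  obtain ⟨C, hC⟩ := h (c / 2) (half_pos hc)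
  filter_upwards [tendsto_norm_cobounded_atTop.eventually_ge_atTop (2 * C / c)] with x hx
  rw [div_le_iff₀ hc] at hx
  have := hC x
  rw [id]
  linarith

end LinearGrowth

theorem isLittleO_id_cobounded_of_tendsto_div {f : ℝ → ℝ}
    (hbot : Tendsto (fun x => f x / x) atBot (𝓝 0))
    (htop : Tendsto (fun x => f x / x) atTop (𝓝 0)) : f =o[cobounded ℝ] id := by
  rw [IsOrderBornology.cobounded_eq]
  refine IsLittleO.sup ?_ ?_
  · exact isLittleO_of_tendsto' ((eventually_ne_atBot 0).mono fun _ hx h => absurd h hx) hbot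
  · exact isLittleO_of_tendsto' ((eventually_ne_atTop 0).mono fun _ hx h => absurd h hx) htop

theorem abs_le_two_mul_exp_add_exp (x : ℝ) : |x| ≤ 2 * (exp (x / 2) + exp (-x / 2)) := by
  have hlin := add_one_le_exp (|x| / 2)
  have hsplit : exp (|x| / 2) ≤ exp (x / 2) + exp (-x / 2) := by
    rcases abs_cases x with ⟨hx, -⟩ | ⟨hx, -⟩ <;> rw [hx] <;>
      linarith [exp_pos (x / 2), exp_pos (-x / 2)]
  linarith

theorem integrableOn_exp_mul_abs_Iic (a : ℝ) : IntegrableOn (fun x => exp x * |x|) (Iic a) := by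
  refine Integrable.mono' (((integrableOn_exp_mul_Iic (by norm_num : (0:ℝ) < 3 / 2) a).add
      (integrableOn_exp_mul_Iic (by norm_num : (0:ℝ) < 1 / 2) a)).const_mul 2)
    (by fun_prop : Continuous fun x => exp x * |x|).aestronglyMeasurable
    (Eventually.of_forall fun x => ?_)
  rw [norm_of_nonneg (by positivity)]
  calc exp x * |x| ≤ exp x * (2 * (exp (x / 2) + exp (-x / 2))) :=
        mul_le_mul_of_nonneg_left (abs_le_two_mul_exp_add_exp x) (exp_pos x).le
    _ = 2 * (exp (3 / 2 * x) + exp (1 / 2 * x)) := by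
        simp only [mul_add, mul_left_comm (exp x), ← exp_add]
        ring_nf

theorem integrableOn_exp_mul_Iic_of_abs_le {f : ℝ → ℝ} (hf : AEStronglyMeasurable f) {c C : ℝ}
    (h : ∀ x, |f x| ≤ c * |x| + C) (a : ℝ) : IntegrableOn (fun x => exp x * f x) (Iic a) := by
  refine Integrable.mono' (((integrableOn_exp_mul_abs_Iic a).const_mul c).add
      ((integrableOn_exp_Iic a).const_mul C))
    (continuous_exp.aestronglyMeasurable.mul hf).restrict (Eventually.of_forall fun x => ?_)
  rw [norm_mul, norm_of_nonneg (exp_pos x).le, Real.norm_eq_abs, Pi.add_apply]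
  nlinarith [mul_le_mul_of_nonneg_left (h x) (exp_pos x).le]

theorem setIntegral_Iic_comp_add_right {E : Type*} [NormedAddCommGroup E] [NormedSpace ℝ E]
    (g : ℝ → E) (c t : ℝ) : ∫ s in Iic c, g (s + t) = ∫ u in Iic (c + t), g u := by
  have := (measurePreserving_add_right volume t).setIntegral_preimage_emb
    (measurableEmbedding_addRight t) g (Iic (c + t))
  rwa [preimage_add_const_Iic, add_sub_cancel_right] at this

theorem hasDerivAt_setIntegral_Iic {E : Type*} [NormedAddCommGroup E] [NormedSpace ℝ E]
    [CompleteSpace E] {g : ℝ → E} (hg : Continuous g) (hint : ∀ a, IntegrableOn g (Iic a))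
    (t : ℝ) : HasDerivAt (fun t => ∫ u in Iic t, g u) (g t) t := by
  have : (fun t => ∫ u in Iic t, g u) = fun t => (∫ u in Iic 0, g u) + ∫ u in 0..t, g u := by
    funext t
    rw [← intervalIntegral.integral_Iic_sub_Iic (hint 0) (hint t), add_sub_cancel]
  rw [this]
  exact (intervalIntegral.integral_hasDerivAt_right (hg.intervalIntegrable _ _)
    (hg.stronglyMeasurableAtFilter _ _) hg.continuousAt).const_add _

noncomputable def expAverage (ω : ℝ → ℝ) (t : ℝ) : ℝ := ∫ s in Iic 0, exp s * ω (s + t)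

theorem expAverage_eq (ω : ℝ → ℝ) (t : ℝ) :
    expAverage ω t = exp (-t) * ∫ u in Iic t, exp u * ω u := by
  have := setIntegral_Iic_comp_add_right (fun u => exp (-t) * (exp u * ω u)) 0 t
  rw [zero_add] at this
  rw [expAverage, ← integral_const_mul, ← this]
  congr 1 with s
  rw [← mul_assoc, ← exp_add]
  ring_nf

theorem abs_expAverage_le {ω : ℝ → ℝ} {ε C : ℝ} (hε : 0 ≤ ε) (h : ∀ u, |ω u| ≤ ε * |u| + C)
    (t : ℝ) : |expAverage ω t| ≤ ε * |t| + (ε * (∫ s in Iic 0, exp s * |s|) + C) := by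
  have hI := (integrableOn_exp_mul_abs_Iic 0).const_mul ε
  have hE := (integrableOn_exp_Iic 0).const_mul (ε * |t| + C)
  calc |expAverage ω t| ≤ ∫ s in Iic 0, (ε * (exp s * |s|) + (ε * |t| + C) * exp s) := by
        rw [← Real.norm_eq_abs, expAverage]
        refine norm_integral_le_of_norm_le (hI.add hE) (Eventually.of_forall fun s => ?_)
        rw [norm_mul, norm_of_nonneg (exp_pos s).le, Real.norm_eq_abs]
        have := mul_le_mul_of_nonneg_left (abs_add_le s t) hε
        nlinarith [mul_le_mul_of_nonneg_left (h (s + t)) (exp_pos s).le, exp_pos s]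
    _ = ε * |t| + (ε * (∫ s in Iic 0, exp s * |s|) + C) := by
        rw [integral_add hI hE, integral_const_mul, integral_const_mul, integral_exp_Iic_zero]
        ring

section SublinearPath

variable {ω : ℝ → ℝ} (hcont : Continuous ω) (hω : ω =o[cobounded ℝ] id)
include hcont hω

theorem integrableOn_exp_mul_Iic_of_isLittleO (a : ℝ) :
    IntegrableOn (fun x => exp x * ω x) (Iic a) := by
  obtain ⟨C, hC⟩ := hcont.exists_norm_le_mul_norm_add_of_isLittleO hω one_pos
  exact integrableOn_exp_mul_Iic_of_abs_le hcont.aestronglyMeasurable hC a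

theorem setIntegral_exp_mul_sub_eq (t : ℝ) :
    ∫ s in Iic 0, exp s * (ω (s + t) - ω t) = expAverage ω t - ω t := by
  obtain ⟨C, hC⟩ := hcont.exists_norm_le_mul_norm_add_of_isLittleO hω one_pos
  simp only [Real.norm_eq_abs, one_mul] at hC
  have hint : IntegrableOn (fun s => exp s * ω (s + t)) (Iic 0) := by
    refine integrableOn_exp_mul_Iic_of_abs_le (c := 1) (C := |t| + C)
      (by fun_prop : Continuous fun s => ω (s + t)).aestronglyMeasurable (fun s => ?_) 0
    linarith [hC (s + t), abs_add_le s t]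
  simp only [mul_sub]
  rw [integral_sub hint ((integrableOn_exp_Iic 0).mul_const _), integral_mul_const,
    integral_exp_Iic_zero, one_mul, expAverage]

theorem hasDerivAt_expAverage (t : ℝ) :
    HasDerivAt (expAverage ω) (ω t - expAverage ω t) t := by
  have hF := hasDerivAt_setIntegral_Iic (g := fun u => exp u * ω u)
    (continuous_exp.mul hcont) (integrableOn_exp_mul_Iic_of_isLittleO hcont hω) t
  refine (((hasDerivAt_neg t).exp.mul hF).congr_deriv ?_).congr_of_eventuallyEq
    (Eventually.of_forall (expAverage_eq ω))
  rw [expAverage_eq, ← mul_assoc, ← exp_add, neg_add_cancel, exp_zero]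
  ring

theorem integral_sub_expAverage (a b : ℝ) :
    ∫ s in a..b, (ω s - expAverage ω s) = expAverage ω b - expAverage ω a := by
  have hG := hasDerivAt_expAverage hcont hω
  have hGc : Continuous (expAverage ω) :=
    continuous_iff_continuousAt.2 fun s => (hG s).continuousAt
  exact intervalIntegral.integral_eq_sub_of_hasDerivAt (fun s _ => hG s)
    ((hcont.sub hGc).intervalIntegrable a b)

theorem isLittleO_expAverage : expAverage ω =o[cobounded ℝ] id := by
  refine isLittleO_id_cobounded_of_forall_norm_le fun ε hε => ?_
  obtain ⟨C, hC⟩ := hcont.exists_norm_le_mul_norm_add_of_isLittleO hω hε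
  exact ⟨_, abs_expAverage_le hε.le hC⟩

end SublinearPath

theorem ou_average_sublinear_general
    (σ : ℝ) (ω : ℝ → ℝ) (hωcont : Continuous ω)
    (hsub_bot : Filter.Tendsto (fun s => ω s / s) Filter.atBot (nhds 0))
    (hsub_top : Filter.Tendsto (fun s => ω s / s) Filter.atTop (nhds 0))
    (z : ℝ → ℝ)
    (hz : ∀ t : ℝ, z t = σ * ∫ s in Set.Iic (0:ℝ), Real.exp s * (ω (s + t) - ω t)) :
    Filter.Tendsto (fun t => (∫ s in (0:ℝ)..t, z s) / t) Filter.atTop (nhds 0) ∧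
    Filter.Tendsto (fun t => (∫ s in (0:ℝ)..t, z s) / t) Filter.atBot (nhds 0) := by
  have hω := isLittleO_id_cobounded_of_tendsto_div hsub_bot hsub_top
  have hprim : (fun t => ∫ s in (0:ℝ)..t, z s)
      = fun t => -σ * (expAverage ω t - expAverage ω 0) := by
    funext t
    have hneg (s : ℝ) : expAverage ω s - ω s = -(ω s - expAverage ω s) := (neg_sub _ _).symm
    simp only [hz, setIntegral_exp_mul_sub_eq hωcont hω, hneg, intervalIntegral.integral_const_mul,
      intervalIntegral.integral_neg, integral_sub_expAverage hωcont hω]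
    ring
  have hint : (fun t => ∫ s in (0:ℝ)..t, z s) =o[cobounded ℝ] id := by
    rw [hprim]
    exact ((isLittleO_expAverage hωcont hω).sub
      (isLittleO_const_id_cobounded _)).const_mul_left _
  exact ⟨(hint.mono IsOrderBornology.atTop_le_cobounded).tendsto_div_nhds_zero,
    (hint.mono IsOrderBornology.atBot_le_cobounded).tendsto_div_nhds_zero⟩

/-- For the pathwise stationary Ornstein–Uhlenbeck process
`z t = σ ∫_{−∞}^0 e^s (ω (s+t) − ω t) ds` driven by a continuous path `ω` with `ω 0 = 0`
that is sublinear at both `−∞` and `+∞`, the time averages satisfy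
`(1/t) ∫_0^t z(s) ds → 0` as `t → ±∞`. -/
theorem ou_average_sublinear
    (σ : ℝ) (ω : ℝ → ℝ) (hωcont : Continuous ω) (hω0 : ω 0 = 0)
    (hsub_bot : Filter.Tendsto (fun s => ω s / s) Filter.atBot (nhds 0))
    (hsub_top : Filter.Tendsto (fun s => ω s / s) Filter.atTop (nhds 0))
    (z : ℝ → ℝ)
    (hz : ∀ t : ℝ, z t = σ * ∫ s in Set.Iic (0:ℝ), Real.exp s * (ω (s + t) - ω t)) :
    Filter.Tendsto (fun t => (∫ s in (0:ℝ)..t, z s) / t) Filter.atTop (nhds 0) ∧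
    Filter.Tendsto (fun t => (∫ s in (0:ℝ)..t, z s) / t) Filter.atBot (nhds 0) :=
  ou_average_sublinear_general σ ω hωcont hsub_bot hsub_top z hz
end

section
/- Let η > 0 and let ν, σ ∈ ℝ satisfy σ ≠ 0, |ν| ≤ |σ| and |ν| + |σ| < η/2. Then there is a constant C > 0 depending only on η such that: for every K ≥ 0 and every continuous function ω : (−∞, 0] → ℝ with |ω(τ)| ≤ K + |τ| for all τ ≤ 0, one has sup_{τ ≤ 0} |1 − e^{ν τ + σ ω(τ)}| / ( |σ| e^{η |τ|} ) ≤ C e^{|σ| K} ( 1 + K ). -/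
/-!
Write `x = ντ + σω(τ)`. The elementary bound `|1 - eˣ| ≤ |x| e^{|x|}` reduces everything
to `|x|`. On the one hand `|x| ≤ |σ|(K + 2|τ|)`, which produces the factor `|σ|` cancelling
the denominator; on the other `|x| ≤ |σ|K + (η/2)|τ|`, so `e^{|x|}` costs only half of the
weight `e^{η|τ|}`. The other half absorbs the polynomial growth: `K + 2|τ| ≤ (1 + 4/η)(1 + K) e^{(η/2)|τ|}`.
-/

open Real

lemma abs_one_sub_exp_le (x : ℝ) : |1 - exp x| ≤ |x| * exp |x| := by
  rcases le_total x 0 with hx | hx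
  · have h : 1 - exp x ≤ -x := by linarith [add_one_le_exp x]
    rw [abs_of_nonneg (by linarith [exp_le_one_iff.mpr hx]), abs_of_nonpos hx]
    nlinarith [one_le_exp (neg_nonneg.mpr hx)]
  · have h : (1 - x) * exp x ≤ 1 := by
      simpa [← exp_add] using mul_le_mul_of_nonneg_right (one_sub_le_exp_neg x) (exp_pos x).le
    rw [abs_of_nonpos (by linarith [one_le_exp hx]), abs_of_nonneg hx]
    linarith

lemma abs_mul_add_mul_le {ν σ τ w K : ℝ} (hw : |w| ≤ K + |τ|) :
    |ν * τ + σ * w| ≤ |σ| * K + (|ν| + |σ|) * |τ| :=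
  calc |ν * τ + σ * w| ≤ |ν| * |τ| + |σ| * |w| := by
        simpa only [abs_mul] using abs_add_le (ν * τ) (σ * w)
    _ ≤ |ν| * |τ| + |σ| * (K + |τ|) := by gcongr
    _ = |σ| * K + (|ν| + |σ|) * |τ| := by ring

lemma add_two_mul_le_exp {η K t : ℝ} (hη : 0 < η) (hK : 0 ≤ K) (ht : 0 ≤ t) :
    K + 2 * t ≤ (1 + 4 / η) * (1 + K) * exp (η / 2 * t) := by
  have h_lin : 1 + 2 * t ≤ (1 + 4 / η) * (1 + η / 2 * t) := by
    have h_expand : (1 + 4 / η) * (1 + η / 2 * t) = 1 + 2 * t + (η / 2 * t + 4 / η) := by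
      field_simp
      ring
    rw [h_expand]
    linarith [show 0 ≤ η / 2 * t + 4 / η by positivity]
  calc K + 2 * t ≤ (1 + K) * (1 + 2 * t) := by nlinarith
    _ ≤ (1 + K) * ((1 + 4 / η) * (1 + η / 2 * t)) := by gcongr
    _ ≤ (1 + K) * ((1 + 4 / η) * exp (η / 2 * t)) := by
        gcongr
        linarith [add_one_le_exp (η / 2 * t)]
    _ = (1 + 4 / η) * (1 + K) * exp (η / 2 * t) := by ring

/-- (Deterministic content of Lemma 4.5.)  Let `η > 0` and
`ν, σ ∈ ℝ` with `σ ≠ 0`, `|ν| ≤ |σ|` and `|ν| + |σ| < η/2`.  Then there is a constant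
`C > 0` depending only on `η` such that for every `K ≥ 0` and every continuous
`ω : (−∞,0] → ℝ` with `|ω τ| ≤ K + |τ|` for all `τ ≤ 0`,
`sup_{τ ≤ 0} |1 − e^{ντ + σ ω τ}| / (|σ| e^{η|τ|}) ≤ C e^{|σ|K} (1 + K)`. -/
theorem K2_bound (η : ℝ) (hη : 0 < η) :
    ∃ C : ℝ, 0 < C ∧
      ∀ ν σ : ℝ, σ ≠ 0 → |ν| ≤ |σ| → |ν| + |σ| < η / 2 →
        ∀ K : ℝ, 0 ≤ K →
          ∀ ω : ℝ → ℝ, ContinuousOn ω (Set.Iic 0) →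
            (∀ τ ≤ (0:ℝ), |ω τ| ≤ K + |τ|) →
            ∀ τ ≤ (0:ℝ),
              |1 - Real.exp (ν * τ + σ * ω τ)| / (|σ| * Real.exp (η * |τ|))
                ≤ C * Real.exp (|σ| * K) * (1 + K) := by
  refine ⟨1 + 4 / η, by positivity, fun ν σ hσ hνσ hsum K hK ω _ hω τ hτ => ?_⟩
  set x := ν * τ + σ * ω τ
  have hx := abs_mul_add_mul_le (ν := ν) (σ := σ) (hω τ hτ)
  have hx_lin : |x| ≤ |σ| * (K + 2 * |τ|) := by
    nlinarith [mul_le_mul_of_nonneg_right hνσ (abs_nonneg τ)]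
  have hx_exp : exp |x| ≤ exp (|σ| * K) * exp (η / 2 * |τ|) := by
    rw [← exp_add, exp_le_exp]
    nlinarith [abs_nonneg τ]
  rw [div_le_iff₀ (mul_pos (abs_pos.mpr hσ) (exp_pos _))]
  calc |1 - exp x| ≤ |x| * exp |x| := abs_one_sub_exp_le x
    _ ≤ |σ| * (K + 2 * |τ|) * (exp (|σ| * K) * exp (η / 2 * |τ|)) := by gcongr
    _ ≤ |σ| * ((1 + 4 / η) * (1 + K) * exp (η / 2 * |τ|))
          * (exp (|σ| * K) * exp (η / 2 * |τ|)) := by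
        gcongr
        exact add_two_mul_le_exp hη hK (abs_nonneg τ)
    _ = (1 + 4 / η) * exp (|σ| * K) * (1 + K) * (|σ| * exp (η * |τ|)) := by
        rw [show η * |τ| = η / 2 * |τ| + η / 2 * |τ| by ring, exp_add]
        ring
end

section
/- Let H be a normed space, let η, ν ∈ ℝ with η + ν > 0, let z : (−∞,0] → ℝ be continuous, and let f : (−∞,0] → H be continuous with ‖f(τ)‖ ≤ M e^{−ητ + ∫_0^τ z(r) dr} for all τ ≤ 0. Then for every t ≤ 0, ‖ ∫_t^0 e^{ν(t−τ) + ∫_τ^t z(r) dr} f(τ) dτ ‖ ≤ ( M / (η + ν) ) e^{−ηt + ∫_0^t z(r) dr}. -/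
/-! The bound on `f` and the kernel combine, by additivity of `∫ z`, into
`e^{−ηt + ∫_0^t z} · e^{−(η+ν)(τ−t)}`: the `z`-weights telescope and only the exponential decay
in `τ − t` is left to integrate, which contributes at most `1/(η+ν)`. -/

open Real Set intervalIntegral

lemma integral_exp_neg_mul_sub_le {a : ℝ} (ha : 0 < a) (t s : ℝ) :
    ∫ τ in t..s, exp (-a * (τ - t)) ≤ a⁻¹ := by
  have hval : ∫ τ in t..s, exp (-a * (τ - t)) = a⁻¹ * (1 - exp (-a * (s - t))) := by
    rw [integral_comp_sub_right (fun x => exp (-a * x)),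
      integral_comp_mul_left (fun x => exp x) (neg_ne_zero.mpr ha.ne'), integral_exp]
    simp only [sub_self, mul_zero, exp_zero, smul_eq_mul, inv_neg]
    ring
  rw [hval]
  have := exp_pos (-a * (s - t))
  have := inv_pos.mpr ha
  nlinarith

lemma ContinuousOn.intervalIntegrable_of_le_zero {z : ℝ → ℝ} (hz : ContinuousOn z (Iic 0))
    {a b : ℝ} (ha : a ≤ 0) (hb : b ≤ 0) : IntervalIntegrable z MeasureTheory.volume a b :=
  (hz.mono fun _ hx => hx.2.trans (max_le ha hb)).intervalIntegrable

lemma norm_exp_kernel_smul_le {H : Type*} [NormedAddCommGroup H] [NormedSpace ℝ H]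
    {η ν M : ℝ} {z : ℝ → ℝ} (hz : ContinuousOn z (Iic 0)) {f : ℝ → H}
    (hbd : ∀ τ ≤ (0:ℝ), ‖f τ‖ ≤ M * exp (-η * τ + ∫ r in (0:ℝ)..τ, z r))
    {t τ : ℝ} (ht : t ≤ 0) (hτ : τ ≤ 0) :
    ‖exp (ν * (t - τ) + ∫ r in τ..t, z r) • f τ‖
      ≤ M * exp (-η * t + ∫ r in (0:ℝ)..t, z r) * exp (-(η + ν) * (τ - t)) := by
  have hadd : (∫ r in (0:ℝ)..τ, z r) + ∫ r in τ..t, z r = ∫ r in (0:ℝ)..t, z r :=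
    integral_add_adjacent_intervals (hz.intervalIntegrable_of_le_zero le_rfl hτ)
      (hz.intervalIntegrable_of_le_zero hτ ht)
  have hexp : exp (ν * (t - τ) + ∫ r in τ..t, z r) * exp (-η * τ + ∫ r in (0:ℝ)..τ, z r)
      = exp (-η * t + ∫ r in (0:ℝ)..t, z r) * exp (-(η + ν) * (τ - t)) := by
    rw [← exp_add, ← exp_add, ← hadd]
    ring_nf
  calc ‖exp (ν * (t - τ) + ∫ r in τ..t, z r) • f τ‖
      = exp (ν * (t - τ) + ∫ r in τ..t, z r) * ‖f τ‖ := by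
        rw [norm_smul, norm_of_nonneg (exp_pos _).le]
    _ ≤ exp (ν * (t - τ) + ∫ r in τ..t, z r) * (M * exp (-η * τ + ∫ r in (0:ℝ)..τ, z r)) :=
        mul_le_mul_of_nonneg_left (hbd τ hτ) (exp_pos _).le
    _ = M * exp (-η * t + ∫ r in (0:ℝ)..t, z r) * exp (-(η + ν) * (τ - t)) := by
        rw [mul_left_comm, hexp, mul_assoc]

theorem weighted_convolution_center_general
    {H : Type*} [NormedAddCommGroup H] [NormedSpace ℝ H]
    (η ν : ℝ) (hην : 0 < η + ν)
    (z : ℝ → ℝ) (hz : ContinuousOn z (Set.Iic 0))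
    (f : ℝ → H)
    (M : ℝ)
    (hbd : ∀ τ ≤ (0:ℝ), ‖f τ‖ ≤ M * Real.exp (-η * τ + ∫ r in (0:ℝ)..τ, z r)) :
    ∀ t ≤ (0:ℝ),
      ‖∫ τ in t..(0:ℝ), Real.exp (ν * (t - τ) + ∫ r in τ..t, z r) • f τ‖
        ≤ (M / (η + ν)) * Real.exp (-η * t + ∫ r in (0:ℝ)..t, z r) := by
  intro t ht
  set W := exp (-η * t + ∫ r in (0:ℝ)..t, z r)
  have hMW : 0 ≤ M * W :=
    mul_nonneg ((norm_nonneg _).trans (by simpa using hbd 0 le_rfl)) (exp_pos _).le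
  calc ‖∫ τ in t..(0:ℝ), exp (ν * (t - τ) + ∫ r in τ..t, z r) • f τ‖
      ≤ ∫ τ in t..(0:ℝ), M * W * exp (-(η + ν) * (τ - t)) :=
        norm_integral_le_of_norm_le ht
          (Filter.Eventually.of_forall fun τ hτ => norm_exp_kernel_smul_le hz hbd ht hτ.2)
          ((by fun_prop : Continuous fun τ => M * W * exp (-(η + ν) * (τ - t))).intervalIntegrable _ _)
    _ = M * W * ∫ τ in t..(0:ℝ), exp (-(η + ν) * (τ - t)) := integral_const_mul _ _
    _ ≤ M * W * (η + ν)⁻¹ := by gcongr; exact integral_exp_neg_mul_sub_le hην t 0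
    _ = M / (η + ν) * W := by ring

/-- (Weighted convolution estimate for the `H_c`-component of the
Lyapunov–Perron operator.)  Let `H` be a Banach space, `η + ν > 0`, `z : (−∞,0] → ℝ`
continuous, and `f : (−∞,0] → H` continuous with
`‖f τ‖ ≤ M e^{−ητ + ∫_0^τ z(r) dr}` for all `τ ≤ 0`.  Then for every `t ≤ 0`,
`‖∫_t^0 e^{ν(t−τ) + ∫_τ^t z(r) dr} f(τ) dτ‖ ≤ (M/(η+ν)) e^{−ηt + ∫_0^t z(r) dr}`. -/
theorem weighted_convolution_center
    {H : Type*} [NormedAddCommGroup H] [NormedSpace ℝ H] [CompleteSpace H]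
    (η ν : ℝ) (hην : 0 < η + ν)
    (z : ℝ → ℝ) (hz : ContinuousOn z (Set.Iic 0))
    (f : ℝ → H) (hf : ContinuousOn f (Set.Iic 0))
    (M : ℝ)
    (hbd : ∀ τ ≤ (0:ℝ), ‖f τ‖ ≤ M * Real.exp (-η * τ + ∫ r in (0:ℝ)..τ, z r)) :
    ∀ t ≤ (0:ℝ),
      ‖∫ τ in t..(0:ℝ), Real.exp (ν * (t - τ) + ∫ r in τ..t, z r) • f τ‖
        ≤ (M / (η + ν)) * Real.exp (-η * t + ∫ r in (0:ℝ)..t, z r) :=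
  weighted_convolution_center_general η ν hην z hz f M hbd
end

section
/- Let Y and H be Banach spaces, α ∈ (0,1), M > 0, and η, ν, λ ∈ ℝ with λ > η + ν. Let S : (0,∞) → L(Y, H) be continuous in operator norm with ‖S(r)‖ ≤ M r^{−α} e^{−λ r} for all r > 0. Let z : (−∞,0] → ℝ be continuous and f : (−∞,0] → Y continuous with ‖f(τ)‖_Y ≤ N e^{−ητ + ∫_0^τ z(r) dr} for all τ ≤ 0. Then for every t ≤ 0 the Bochner integral ∫_{−∞}^t e^{ν(t−τ) + ∫_τ^t z(r) dr} S(t−τ)( f(τ) ) dτ converges absolutely in H and ‖ ∫_{−∞}^t e^{ν(t−τ) + ∫_τ^t z(r) dr} S(t−τ)( f(τ) ) dτ ‖ ≤ N M Γ(1−α) (λ − η − ν)^{α−1} e^{−ηt + ∫_0^t z(r) dr}, where Γ is the Gamma function. -/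
/-!
With `Z τ = ∫_0^τ z`, the weight `e^{∫_τ^t z} = e^{Z t - Z τ}` cancels the factor `e^{Z τ}` in
the bound on `f τ`, so the integrand is dominated by `N M e^{-η t + Z t}` times the kernel
`s^{-α} e^{-(λ-η-ν) s}` at `s = t - τ`. That kernel is integrable on `(0, ∞)` because `α < 1`
and `λ > η + ν`, with integral `Γ(1-α) (λ-η-ν)^{α-1}`.
-/

open MeasureTheory Set Real

section Kernel

variable {α c : ℝ}

theorem integrableOn_rpow_neg_mul_exp_neg_mul (hα : α < 1) (hc : 0 < c) :
    IntegrableOn (fun s : ℝ => s ^ (-α) * exp (-(c * s))) (Ioi 0) := by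
  simpa only [rpow_one, neg_mul] using
    integrableOn_rpow_mul_exp_neg_mul_rpow (s := -α) (by linarith) one_pos hc

theorem integral_rpow_neg_mul_exp_neg_mul_Ioi (hα : α < 1) (hc : 0 < c) :
    ∫ s in Ioi (0 : ℝ), s ^ (-α) * exp (-(c * s)) = Gamma (1 - α) * c ^ (α - 1) := by
  have h := integral_rpow_mul_exp_neg_mul_Ioi (a := 1 - α) (by linarith) hc
  rw [show 1 - α - 1 = -α by ring, one_div, inv_rpow hc.le, ← rpow_neg hc.le, neg_sub] at h
  rw [h, mul_comm]

end Kernel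

section Reflection

variable {E : Type*} [NormedAddCommGroup E]

theorem integrableOn_Iio_comp_sub_left_iff (f : ℝ → E) (t : ℝ) :
    IntegrableOn (fun τ => f (t - τ)) (Iio t) ↔ IntegrableOn f (Ioi 0) := by
  have hpre : (fun τ : ℝ => t - τ) ⁻¹' Ioi 0 = Iio t := by ext; simp
  rw [← hpre]
  exact (Measure.measurePreserving_sub_left volume t).integrableOn_comp_preimage
    (MeasurableEquiv.subLeft t).measurableEmbedding

variable [NormedSpace ℝ E]

theorem setIntegral_Iio_comp_sub_left (f : ℝ → E) (t : ℝ) :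
    ∫ τ in Iio t, f (t - τ) = ∫ s in Ioi 0, f s := by
  have hpre : (fun τ : ℝ => t - τ) ⁻¹' Ioi 0 = Iio t := by ext; simp
  rw [← hpre]
  exact (Measure.measurePreserving_sub_left volume t).setIntegral_preimage_emb
    (MeasurableEquiv.subLeft t).measurableEmbedding f (Ioi 0)

theorem integrableOn_Iic_and_norm_setIntegral_le_of_norm_le_comp_sub {g : ℝ → E} {k : ℝ → ℝ}
    {t : ℝ} (hg : AEStronglyMeasurable g (volume.restrict (Iio t)))
    (hk : IntegrableOn k (Ioi 0)) (hgk : ∀ τ < t, ‖g τ‖ ≤ k (t - τ)) :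
    IntegrableOn g (Iic t) ∧ ‖∫ τ in Iic t, g τ‖ ≤ ∫ s in Ioi 0, k s := by
  have hk' : IntegrableOn (fun τ => k (t - τ)) (Iio t) :=
    (integrableOn_Iio_comp_sub_left_iff k t).mpr hk
  have hgk' : ∀ᵐ τ ∂(volume.restrict (Iio t)), ‖g τ‖ ≤ k (t - τ) :=
    (ae_restrict_iff' measurableSet_Iio).mpr (.of_forall hgk)
  refine ⟨(integrableOn_Iic_iff_integrableOn_Iio).mpr (hk'.mono' hg hgk'), ?_⟩
  rw [integral_Iic_eq_integral_Iio, ← setIntegral_Iio_comp_sub_left k t]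
  exact norm_integral_le_of_norm_le hk' hgk'

end Reflection

section Primitive

variable {z : ℝ → ℝ} {t : ℝ}

theorem integral_eq_sub_of_continuousOn_Iic (hz : ContinuousOn z (Iic 0)) {τ : ℝ}
    (hτ : τ ≤ 0) (ht : t ≤ 0) :
    ∫ r in τ..t, z r = (∫ r in (0 : ℝ)..t, z r) - ∫ r in (0 : ℝ)..τ, z r := by
  have hint : ∀ b ≤ (0 : ℝ), IntervalIntegrable z volume 0 b := fun b hb =>
    (hz.mono fun r hr => (hr.2.trans (sup_le le_rfl hb) : r ≤ 0)).intervalIntegrable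
  exact (intervalIntegral.integral_interval_sub_left (hint t ht) (hint τ hτ)).symm

theorem continuousOn_integral_left_of_continuousOn_Iic (hz : ContinuousOn z (Iic 0))
    (ht : t ≤ 0) : ContinuousOn (fun τ => ∫ r in τ..t, z r) (Iic 0) := by
  set z' : ℝ → ℝ := fun r => z (min r 0)
  have hz' : Continuous z' :=
    hz.comp_continuous (continuous_id.min continuous_const) fun r => min_le_right r 0
  have hcont : Continuous fun τ => ∫ r in τ..t, z' r := by
    simp only [intervalIntegral.integral_symm t]
    exact (intervalIntegral.continuous_primitive (fun a b => hz'.intervalIntegrable a b) t).neg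
  refine hcont.continuousOn.congr fun τ hτ => intervalIntegral.integral_congr fun r hr => ?_
  have : r ≤ 0 := hr.2.trans (sup_le hτ ht)
  simp [z', min_eq_left this]

end Primitive

theorem norm_exp_smul_apply_le {Y H : Type*} [NormedAddCommGroup Y] [NormedSpace ℝ Y]
    [NormedAddCommGroup H] [NormedSpace ℝ H] (A : Y →L[ℝ] H) (y : Y)
    {α M N η ν lam t τ a b : ℝ}
    (hA : ‖A‖ ≤ M * (t - τ) ^ (-α) * exp (-lam * (t - τ)))
    (hy : ‖y‖ ≤ N * exp (-η * τ + b)) :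
    ‖exp (ν * (t - τ) + (a - b)) • A y‖
      ≤ N * M * exp (-η * t + a) * ((t - τ) ^ (-α) * exp (-((lam - η - ν) * (t - τ)))) := by
  have hexp : exp (ν * (t - τ) + (a - b)) * exp (-lam * (t - τ)) * exp (-η * τ + b)
      = exp (-η * t + a) * exp (-((lam - η - ν) * (t - τ))) := by
    simp only [← exp_add]; ring_nf
  calc ‖exp (ν * (t - τ) + (a - b)) • A y‖
      ≤ exp (ν * (t - τ) + (a - b)) * (‖A‖ * ‖y‖) := by
        rw [norm_smul, norm_of_nonneg (exp_pos _).le]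
        exact mul_le_mul_of_nonneg_left (A.le_opNorm y) (exp_pos _).le
    _ ≤ exp (ν * (t - τ) + (a - b)) *
          (M * (t - τ) ^ (-α) * exp (-lam * (t - τ)) * (N * exp (-η * τ + b))) := by
        gcongr
        · exact (norm_nonneg A).trans hA
    _ = N * M * exp (-η * t + a) * ((t - τ) ^ (-α) * exp (-((lam - η - ν) * (t - τ)))) := by
        linear_combination (N * M * (t - τ) ^ (-α)) * hexp

theorem weighted_convolution_stable_general
    {Y H : Type*} [NormedAddCommGroup Y] [NormedSpace ℝ Y]
    [NormedAddCommGroup H] [NormedSpace ℝ H] [CompleteSpace H]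
    (α M η ν lam : ℝ) (hα : α ∈ Set.Ioo (0:ℝ) 1) (hlam : η + ν < lam)
    (S : ℝ → Y →L[ℝ] H) (hScont : ContinuousOn S (Set.Ioi 0))
    (hS : ∀ r > (0:ℝ), ‖S r‖ ≤ M * r ^ (-α) * Real.exp (-lam * r))
    (z : ℝ → ℝ) (hz : ContinuousOn z (Set.Iic 0))
    (f : ℝ → Y) (hf : ContinuousOn f (Set.Iic 0))
    (N : ℝ)
    (hbd : ∀ τ ≤ (0:ℝ), ‖f τ‖ ≤ N * Real.exp (-η * τ + ∫ r in (0:ℝ)..τ, z r)) :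
    ∀ t ≤ (0:ℝ),
      MeasureTheory.IntegrableOn
        (fun τ => Real.exp (ν * (t - τ) + ∫ r in τ..t, z r) • (S (t - τ)) (f τ))
        (Set.Iic t) MeasureTheory.volume ∧
      ‖∫ τ in Set.Iic t, Real.exp (ν * (t - τ) + ∫ r in τ..t, z r) • (S (t - τ)) (f τ)‖
        ≤ N * M * Real.Gamma (1 - α) * (lam - η - ν) ^ (α - 1)
            * Real.exp (-η * t + ∫ r in (0:ℝ)..t, z r) := by
  intro t ht
  have hc : 0 < lam - η - ν := by linarith
  have hIio : Iio t ⊆ Iic 0 := fun τ hτ => (le_of_lt hτ).trans ht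
  have hcont : ContinuousOn
      (fun τ => exp (ν * (t - τ) + ∫ r in τ..t, z r) • (S (t - τ)) (f τ)) (Iio t) := by
    have hweight := (continuousOn_integral_left_of_continuousOn_Iic hz ht).mono hIio
    have hS' : ContinuousOn (fun τ => S (t - τ)) (Iio t) :=
      hScont.comp (by fun_prop) fun τ (hτ : τ < t) => sub_pos.mpr hτ
    exact ((continuousOn_const.mul (continuousOn_const.sub continuousOn_id)).add hweight).rexp.smul
      (hS'.clm_apply (hf.mono hIio))
  have hbound : ∀ τ < t, ‖exp (ν * (t - τ) + ∫ r in τ..t, z r) • (S (t - τ)) (f τ)‖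
      ≤ N * M * exp (-η * t + ∫ r in (0:ℝ)..t, z r)
        * ((t - τ) ^ (-α) * exp (-((lam - η - ν) * (t - τ)))) := fun τ hτ => by
    rw [integral_eq_sub_of_continuousOn_Iic hz (hIio hτ) ht]
    exact norm_exp_smul_apply_le _ _ (hS _ (sub_pos.mpr hτ)) (hbd τ (hIio hτ))
  obtain ⟨hint, hle⟩ := integrableOn_Iic_and_norm_setIntegral_le_of_norm_le_comp_sub
    (hcont.aestronglyMeasurable measurableSet_Iio)
    ((integrableOn_rpow_neg_mul_exp_neg_mul hα.2 hc).const_mul _) hbound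
  refine ⟨hint, hle.trans_eq ?_⟩
  rw [integral_const_mul, integral_rpow_neg_mul_exp_neg_mul_Ioi hα.2 hc]
  ring

/-- (Weighted smoothing convolution estimate for the `H_s`-component of
the Lyapunov–Perron operator.)  Let `Y`, `H` be Banach spaces, `α ∈ (0,1)`, `M > 0`,
`λ > η + ν`, and `S : (0,∞) → L(Y,H)` continuous in operator norm with
`‖S r‖ ≤ M r^{−α} e^{−λ r}`.  Let `z : (−∞,0] → ℝ` be continuous and `f : (−∞,0] → Y`
continuous with `‖f τ‖ ≤ N e^{−ητ + ∫_0^τ z(r) dr}`.  Then for every `t ≤ 0` the integral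
`∫_{−∞}^t e^{ν(t−τ) + ∫_τ^t z(r) dr} S(t−τ)(f τ) dτ` converges absolutely in `H` and its
norm is at most `N M Γ(1−α) (λ−η−ν)^{α−1} e^{−ηt + ∫_0^t z(r) dr}`. -/
theorem weighted_convolution_stable
    {Y H : Type*} [NormedAddCommGroup Y] [NormedSpace ℝ Y]
    [NormedAddCommGroup H] [NormedSpace ℝ H] [CompleteSpace H]
    (α M η ν lam : ℝ) (hα : α ∈ Set.Ioo (0:ℝ) 1) (hM : 0 < M) (hlam : η + ν < lam)
    (S : ℝ → Y →L[ℝ] H) (hScont : ContinuousOn S (Set.Ioi 0))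
    (hS : ∀ r > (0:ℝ), ‖S r‖ ≤ M * r ^ (-α) * Real.exp (-lam * r))
    (z : ℝ → ℝ) (hz : ContinuousOn z (Set.Iic 0))
    (f : ℝ → Y) (hf : ContinuousOn f (Set.Iic 0))
    (N : ℝ)
    (hbd : ∀ τ ≤ (0:ℝ), ‖f τ‖ ≤ N * Real.exp (-η * τ + ∫ r in (0:ℝ)..τ, z r)) :
    ∀ t ≤ (0:ℝ),
      MeasureTheory.IntegrableOn
        (fun τ => Real.exp (ν * (t - τ) + ∫ r in τ..t, z r) • (S (t - τ)) (f τ))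
        (Set.Iic t) MeasureTheory.volume ∧
      ‖∫ τ in Set.Iic t, Real.exp (ν * (t - τ) + ∫ r in τ..t, z r) • (S (t - τ)) (f τ)‖
        ≤ N * M * Real.Gamma (1 - α) * (lam - η - ν) ^ (α - 1)
            * Real.exp (-η * t + ∫ r in (0:ℝ)..t, z r) :=
  weighted_convolution_stable_general α M η ν lam hα hlam S hScont hS z hz f hf N hbd
end
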